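/- arXiv:2504.13795 — 2 statements merged into one kernel-verified Lean document; each statement's English description precedes it below -/
import Mathlib

section
/- There is a constant C > 0 such that for all ξ with 0 < |ξ| ≤ 1, the series ∑_{n=1}^∞ (ξ^{2n}/(4^n n!)) ∫₀^{1/|ξ|} (1+t²)^{-1/2} t^{2n} dt converges and is bounded by C. -/
/-!
Since `t ≤ √(1 + t²)`, the integral is at most `∫₀^{1/|ξ|} t^{2n-1} dt ≤ |ξ|^{-2n}`,
which cancels the factor `ξ^{2n}`. The `n`-th term is therefore at most `1 / (4ⁿ n!) ≤ 4⁻ⁿ`,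
and the series is dominated by a geometric series with sum `1/3`, uniformly in `ξ`.
-/

open Real intervalIntegral

theorem integral_pow_succ_div_sqrt_one_add_sq_le {a : ℝ} (ha : 0 ≤ a) (m : ℕ) :
    ∫ t in (0 : ℝ)..a, t ^ (m + 1) / √(1 + t ^ 2) ≤ a ^ (m + 1) / (m + 1) := by
  have hcont : Continuous fun t : ℝ => t ^ (m + 1) / √(1 + t ^ 2) :=
    .div (by fun_prop) (by fun_prop) fun t => by positivity
  have hle : ∀ t ∈ Set.Icc 0 a, t ^ (m + 1) / √(1 + t ^ 2) ≤ t ^ m := by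
    rintro t ⟨ht, -⟩
    have hsqrt : t ≤ √(1 + t ^ 2) := (le_sqrt ht (by positivity)).2 (by linarith)
    rw [div_le_iff₀ (by positivity), pow_succ]
    exact mul_le_mul_of_nonneg_left hsqrt (by positivity)
  calc ∫ t in (0 : ℝ)..a, t ^ (m + 1) / √(1 + t ^ 2) ≤ ∫ t in (0 : ℝ)..a, t ^ m :=
        integral_mono_on ha (hcont.intervalIntegrable _ _)
          ((continuous_pow m).intervalIntegrable _ _) hle
    _ = a ^ (m + 1) / (m + 1) := by simp [integral_pow]

theorem hasSum_geometric_succ_of_lt_one {r : ℝ} (h₀ : 0 ≤ r) (h₁ : r < 1) :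
    HasSum (fun n : ℕ => r ^ (n + 1)) (r / (1 - r)) := by
  simpa [pow_succ, div_eq_inv_mul] using (hasSum_geometric_of_lt_one h₀ h₁).mul_right r

theorem series_term_nonneg (ξ : ℝ) (n : ℕ) :
    0 ≤ ξ ^ (2 * (n + 1)) / (4 ^ (n + 1) * ((n + 1).factorial : ℝ)) *
      ∫ t in (0 : ℝ)..(1 / |ξ|), t ^ (2 * (n + 1)) / √(1 + t ^ 2) := by
  have hξ : 0 ≤ ξ ^ (2 * (n + 1)) := (even_two_mul _).pow_nonneg ξ
  refine mul_nonneg (by positivity) (integral_nonneg (by positivity) fun t ht => ?_)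
  exact div_nonneg (pow_nonneg ht.1 _) (sqrt_nonneg _)

theorem series_term_le {ξ : ℝ} (hξ : ξ ≠ 0) (n : ℕ) :
    ξ ^ (2 * (n + 1)) / (4 ^ (n + 1) * ((n + 1).factorial : ℝ)) *
      ∫ t in (0 : ℝ)..(1 / |ξ|), t ^ (2 * (n + 1)) / √(1 + t ^ 2) ≤ (1 / 4) ^ (n + 1) := by
  have hξpow : 0 ≤ ξ ^ (2 * (n + 1)) := (even_two_mul _).pow_nonneg ξ
  have hI : ∫ t in (0 : ℝ)..(1 / |ξ|), t ^ (2 * (n + 1)) / √(1 + t ^ 2)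
      ≤ (1 / |ξ|) ^ (2 * (n + 1)) := by
    have h := integral_pow_succ_div_sqrt_one_add_sq_le (by positivity : 0 ≤ 1 / |ξ|) (2 * n + 1)
    rw [show 2 * n + 1 + 1 = 2 * (n + 1) by ring] at h
    exact h.trans (div_le_self (by positivity) (by norm_cast; omega))
  have hcancel : ξ ^ (2 * (n + 1)) * (1 / |ξ|) ^ (2 * (n + 1)) = 1 := by
    rw [← (even_two_mul _).pow_abs, ← mul_pow, mul_one_div_cancel (abs_ne_zero.2 hξ), one_pow]
  have hfact : (1 : ℝ) ≤ (n + 1).factorial := by exact_mod_cast (n + 1).factorial_pos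
  calc _ ≤ ξ ^ (2 * (n + 1)) / (4 ^ (n + 1) * ((n + 1).factorial : ℝ)) *
          (1 / |ξ|) ^ (2 * (n + 1)) :=
        mul_le_mul_of_nonneg_left hI (by positivity)
    _ = 1 / (4 ^ (n + 1) * ((n + 1).factorial : ℝ)) := by rw [div_mul_eq_mul_div, hcancel]
    _ ≤ 1 / 4 ^ (n + 1) :=
        one_div_le_one_div_of_le (by positivity) (le_mul_of_one_le_right (by positivity) hfact)
    _ = (1 / 4) ^ (n + 1) := (one_div_pow _ _).symm

theorem stmt4 : ∃ C : ℝ, 0 < C ∧ ∀ ξ : ℝ, 0 < |ξ| → |ξ| ≤ 1 →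
    Summable (fun n : ℕ => ξ^(2*(n+1)) / (4^(n+1) * (Nat.factorial (n+1) : ℝ)) *
      ∫ t in (0:ℝ)..(1/|ξ|), t^(2*(n+1)) / Real.sqrt (1 + t^2)) ∧
    (∑' n : ℕ, ξ^(2*(n+1)) / (4^(n+1) * (Nat.factorial (n+1) : ℝ)) *
      ∫ t in (0:ℝ)..(1/|ξ|), t^(2*(n+1)) / Real.sqrt (1 + t^2)) ≤ C := by
  refine ⟨1 / 3, by norm_num, fun ξ hξ _ => ?_⟩
  have hgeom : HasSum (fun n : ℕ => (1 / 4 : ℝ) ^ (n + 1)) (1 / 3) := by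
    convert hasSum_geometric_succ_of_lt_one (r := (1 / 4 : ℝ)) (by norm_num) (by norm_num) using 1
    norm_num
  have hle := series_term_le (abs_pos.1 hξ)
  have hsum := Summable.of_nonneg_of_le (series_term_nonneg ξ) hle hgeom.summable
  exact ⟨hsum, hasSum_le hle hsum.hasSum hgeom⟩
end

section
/- Define K̂(ξ) = (1/√2) ∫₀^∞ (1+t²)^{-1/2} exp(-ξ²(1+t²)/4) dt. Then there exists C > 0 such that for all ξ with 0 < |ξ| ≤ 1, |K̂(ξ) - (1/√2) log(1/|ξ|)| ≤ C. -/
/-!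
Split the integral at `T = 1/|ξ|`. On `(0, T]` the Gaussian factor is `1 + O(|ξ|² (1 + t²))`,
so there the integral is `∫₀ᵀ (1 + t²)^{-1/2} dt = arsinh T = log T + O(1)` up to an error
`O(|ξ|² T²) = O(1)`. On `(T, ∞)` we have `|ξ| t ≥ 1`, so the integrand is at most
`|ξ| exp(-|ξ| t / 4)`, whose integral is at most `4`.
-/

noncomputable def Khat (ξ : ℝ) : ℝ :=
  (1 / Real.sqrt 2) * ∫ t in Set.Ioi (0:ℝ), (1 / Real.sqrt (1 + t^2)) * Real.exp (-ξ^2 * (1 + t^2) / 4)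

open MeasureTheory Set Real intervalIntegral

noncomputable def khatIntegrand (ξ t : ℝ) : ℝ :=
  (1 / √(1 + t ^ 2)) * exp (-ξ ^ 2 * (1 + t ^ 2) / 4)

lemma Khat_eq (ξ : ℝ) : Khat ξ = (1 / √2) * ∫ t in Ioi 0, khatIntegrand ξ t := rfl

lemma one_add_sq_pos (t : ℝ) : 0 < 1 + t ^ 2 := by positivity

lemma continuous_inv_sqrt_one_add_sq : Continuous fun t : ℝ => (√(1 + t ^ 2))⁻¹ :=
  Continuous.inv₀ (by fun_prop) fun t => (sqrt_pos.2 (one_add_sq_pos t)).ne'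

lemma khatIntegrand_nonneg (ξ t : ℝ) : 0 ≤ khatIntegrand ξ t := by
  unfold khatIntegrand; positivity

lemma continuous_khatIntegrand (ξ : ℝ) : Continuous (khatIntegrand ξ) := by
  unfold khatIntegrand
  refine Continuous.mul (continuous_const.div (by fun_prop) fun t => ?_) (by fun_prop)
  exact (sqrt_pos.2 (one_add_sq_pos t)).ne'

lemma khatIntegrand_le_inv_sqrt (ξ t : ℝ) : khatIntegrand ξ t ≤ (√(1 + t ^ 2))⁻¹ := by
  rw [khatIntegrand, one_div]
  refine mul_le_of_le_one_right (by positivity) (exp_le_one_iff.2 ?_)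
  have := one_add_sq_pos t
  have := sq_nonneg ξ
  nlinarith

lemma inv_sqrt_sub_le_khatIntegrand (ξ t : ℝ) :
    (√(1 + t ^ 2))⁻¹ - ξ ^ 2 * √(1 + t ^ 2) / 4 ≤ khatIntegrand ξ t := by
  set s := √(1 + t ^ 2)
  have hs : 0 < s := sqrt_pos.2 (one_add_sq_pos t)
  have hs2 : s ^ 2 = 1 + t ^ 2 := sq_sqrt (one_add_sq_pos t).le
  calc s⁻¹ - ξ ^ 2 * s / 4 = s⁻¹ * (-ξ ^ 2 * (1 + t ^ 2) / 4 + 1) := by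
        rw [← hs2]; field_simp; ring
    _ ≤ s⁻¹ * exp (-ξ ^ 2 * (1 + t ^ 2) / 4) :=
        mul_le_mul_of_nonneg_left (add_one_le_exp _) (inv_nonneg.2 hs.le)
    _ = khatIntegrand ξ t := by rw [khatIntegrand, one_div]

lemma khatIntegrand_le_of_one_le_mul {ξ t : ℝ} (h : 1 ≤ |ξ| * t) :
    khatIntegrand ξ t ≤ |ξ| * exp (-(|ξ| / 4) * t) := by
  have ht : 0 < t := pos_of_mul_pos_right (one_pos.trans_le h) (abs_nonneg ξ)
  have h_inv : 1 / √(1 + t ^ 2) ≤ |ξ| := by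
    calc 1 / √(1 + t ^ 2) ≤ 1 / t :=
          one_div_le_one_div_of_le ht (le_sqrt_of_sq_le (by linarith))
      _ ≤ |ξ| := by rwa [div_le_iff₀ ht]
  have h_exp : -ξ ^ 2 * (1 + t ^ 2) / 4 ≤ -(|ξ| / 4) * t := by
    rw [← sq_abs ξ]
    nlinarith
  exact mul_le_mul h_inv (exp_le_exp.2 h_exp) (exp_nonneg _) (abs_nonneg ξ)

lemma integrable_khatIntegrand {ξ : ℝ} (hξ : ξ ≠ 0) : Integrable (khatIntegrand ξ) := by
  refine (integrable_exp_neg_mul_sq (b := ξ ^ 2 / 4) (by positivity)).mono'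
    (continuous_khatIntegrand ξ).aestronglyMeasurable (ae_of_all _ fun t => ?_)
  rw [norm_of_nonneg (khatIntegrand_nonneg ξ t)]
  have h_sqrt : 1 / √(1 + t ^ 2) ≤ 1 :=
    (div_le_one (sqrt_pos.2 (one_add_sq_pos t))).2 (one_le_sqrt.2 (by nlinarith))
  calc khatIntegrand ξ t ≤ 1 * exp (-ξ ^ 2 * (1 + t ^ 2) / 4) :=
        mul_le_mul_of_nonneg_right h_sqrt (exp_nonneg _)
    _ ≤ exp (-(ξ ^ 2 / 4) * t ^ 2) := by
        rw [one_mul, exp_le_exp]; nlinarith [sq_nonneg ξ]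

lemma integral_inv_sqrt_one_add_sq (a b : ℝ) :
    ∫ t in a..b, (√(1 + t ^ 2))⁻¹ = arsinh b - arsinh a :=
  integral_eq_sub_of_hasDerivAt (fun x _ => hasDerivAt_arsinh x)
    (continuous_inv_sqrt_one_add_sq.intervalIntegrable _ _)

lemma log_le_arsinh {x : ℝ} (hx : 0 < x) : log x ≤ arsinh x :=
  log_le_log hx (le_add_of_nonneg_right (sqrt_nonneg _))

lemma arsinh_le_log_three_add_log {x : ℝ} (hx : 1 ≤ x) : arsinh x ≤ log 3 + log x := by
  rw [← log_mul (by norm_num) (by positivity)]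
  refine log_le_log (by positivity) ?_
  have : √(1 + x ^ 2) ≤ 1 + x := (sqrt_le_left (by linarith)).2 (by nlinarith)
  linarith

lemma integral_khatIntegrand_le_arsinh (ξ : ℝ) {T : ℝ} (hT : 0 ≤ T) :
    ∫ t in 0..T, khatIntegrand ξ t ≤ arsinh T := by
  calc ∫ t in 0..T, khatIntegrand ξ t ≤ ∫ t in 0..T, (√(1 + t ^ 2))⁻¹ :=
        integral_mono_on hT ((continuous_khatIntegrand ξ).intervalIntegrable _ _)
          (continuous_inv_sqrt_one_add_sq.intervalIntegrable _ _)
          fun t _ => khatIntegrand_le_inv_sqrt ξ t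
    _ = arsinh T := by rw [integral_inv_sqrt_one_add_sq, arsinh_zero, sub_zero]

lemma arsinh_sub_le_integral_khatIntegrand (ξ : ℝ) {T : ℝ} (hT : 0 ≤ T) :
    arsinh T - ξ ^ 2 * (1 + T) / 4 * T ≤ ∫ t in 0..T, khatIntegrand ξ t := by
  have h_inv_sqrt : IntervalIntegrable (fun t : ℝ => (√(1 + t ^ 2))⁻¹) volume 0 T :=
    continuous_inv_sqrt_one_add_sq.intervalIntegrable _ _
  calc arsinh T - ξ ^ 2 * (1 + T) / 4 * T
      = ∫ t in 0..T, ((√(1 + t ^ 2))⁻¹ - ξ ^ 2 * (1 + T) / 4) := by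
        rw [integral_sub h_inv_sqrt intervalIntegrable_const, integral_inv_sqrt_one_add_sq,
          intervalIntegral.integral_const, arsinh_zero, smul_eq_mul]
        ring
    _ ≤ ∫ t in 0..T, khatIntegrand ξ t := by
        refine integral_mono_on hT (h_inv_sqrt.sub intervalIntegrable_const)
          ((continuous_khatIntegrand ξ).intervalIntegrable _ _) fun t ht => ?_
        have h_sqrt : √(1 + t ^ 2) ≤ 1 + T :=
          (sqrt_le_left (by linarith)).2 (by nlinarith [ht.1, ht.2])
        have := inv_sqrt_sub_le_khatIntegrand ξ t
        have := mul_le_mul_of_nonneg_left h_sqrt (sq_nonneg ξ)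
        linarith

lemma integral_Ioi_khatIntegrand_le_four {ξ T : ℝ} (h : 1 ≤ |ξ| * T) :
    ∫ t in Ioi T, khatIntegrand ξ t ≤ 4 := by
  have hξ : 0 < |ξ| := (abs_nonneg ξ).lt_of_ne fun h0 => by rw [← h0, zero_mul] at h; linarith
  have hT : 0 < T := pos_of_mul_pos_right (one_pos.trans_le h) hξ.le
  have h_rate : -(|ξ| / 4) < 0 := by linarith
  calc ∫ t in Ioi T, khatIntegrand ξ t ≤ ∫ t in Ioi T, |ξ| * exp (-(|ξ| / 4) * t) :=
        setIntegral_mono_on (integrable_khatIntegrand (abs_pos.1 hξ)).integrableOn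
          ((integrableOn_exp_mul_Ioi h_rate T).const_mul _) measurableSet_Ioi fun t ht =>
            khatIntegrand_le_of_one_le_mul (h.trans (mul_le_mul_of_nonneg_left ht.le hξ.le))
    _ = 4 * exp (-(|ξ| / 4) * T) := by
        rw [MeasureTheory.integral_const_mul, integral_exp_mul_Ioi h_rate]
        field_simp
    _ ≤ 4 * 1 := by gcongr; exact exp_le_one_iff.2 (by nlinarith)
    _ = 4 := mul_one 4

lemma abs_integral_khatIntegrand_sub_log_le {ξ : ℝ} (hξ0 : 0 < |ξ|) (hξ1 : |ξ| ≤ 1) :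
    |(∫ t in Ioi 0, khatIntegrand ξ t) - log |ξ|⁻¹| ≤ 4 + log 3 := by
  set T := |ξ|⁻¹
  have hT : 1 ≤ T := one_le_inv₀ hξ0 |>.2 hξ1
  have hξT : |ξ| * T = 1 := mul_inv_cancel₀ hξ0.ne'
  clear_value T
  have h_int := integrable_khatIntegrand (abs_pos.1 hξ0)
  have h_split := integral_interval_add_Ioi h_int.integrableOn h_int.integrableOn (a := 0) (b := T)
  have h_tail_nonneg : 0 ≤ ∫ t in Ioi T, khatIntegrand ξ t :=
    setIntegral_nonneg measurableSet_Ioi fun t _ => khatIntegrand_nonneg ξ t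
  have h_tail := integral_Ioi_khatIntegrand_le_four hξT.ge
  have h_low := arsinh_sub_le_integral_khatIntegrand ξ (zero_le_one.trans hT)
  have h_up := integral_khatIntegrand_le_arsinh ξ (zero_le_one.trans hT)
  have h_err : ξ ^ 2 * (1 + T) / 4 * T ≤ 1 / 2 := by
    have : ξ ^ 2 * (1 + T) * T = 1 + |ξ| := by
      rw [← sq_abs]; linear_combination (|ξ| + |ξ| * T + 1) * hξT
    linarith
  have h_arsinh_low := log_le_arsinh (one_pos.trans_le hT)
  have h_arsinh_up := arsinh_le_log_three_add_log hT
  rw [abs_le]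
  constructor <;> linarith

theorem stmt7 : ∃ C : ℝ, 0 < C ∧ ∀ ξ : ℝ, 0 < |ξ| → |ξ| ≤ 1 →
    |Khat ξ - (1 / Real.sqrt 2) * Real.log (1/|ξ|)| ≤ C := by
  refine ⟨4 + log 3, by positivity, fun ξ hξ0 hξ1 => ?_⟩
  have h_factor : |1 / √2| ≤ 1 := by
    rw [abs_of_nonneg (by positivity), div_le_one (by positivity)]
    exact one_le_sqrt.2 one_le_two
  calc |Khat ξ - (1 / √2) * log (1 / |ξ|)|
      = |1 / √2| * |(∫ t in Ioi 0, khatIntegrand ξ t) - log |ξ|⁻¹| := by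
        rw [Khat_eq, one_div |ξ|, ← mul_sub, abs_mul]
    _ ≤ 1 * (4 + log 3) := mul_le_mul h_factor
        (abs_integral_khatIntegrand_sub_log_le hξ0 hξ1) (abs_nonneg _) zero_le_one
    _ = 4 + log 3 := one_mul _
end
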